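/- Let n ≥ 2 and let κ₁,…,κ_{n−1} and c₁,…,c_{n−1} be positive real numbers with Σ_{i=1}^{n−1} c_i/κ_i < 1. Let ℳ = {(𝐪, p) ∈ ℝⁿ × ℝ^{n−1} : 𝐪₁² + … + 𝐪_n² = 1} and ℳ_c = {(𝐪,p) ∈ ℳ : p_i² + κ_i 𝐪_i² = c_i for i = 1,…,n−1}. Then: (i) every point of ℳ_c satisfies 𝐪_n² ≥ 1 − Σ c_i/κ_i > 0, so ℳ_c does not meet {𝐪_n = 0}; (ii) ℳ_c is the disjoint union of the two nonempty sets ℳ_c⁺ = ℳ_c ∩ {𝐪_n > 0} and ℳ_c⁻ = ℳ_c ∩ {𝐪_n < 0}, each of which is both open and closed in ℳ_c; and (iii) each of ℳ_c⁺ and ℳ_c⁻ is homeomorphic to the (n−1)-dimensional torus, i.e. to the product of n−1 circles Π_{i=1}^{n−1}{(x,y) ∈ ℝ² : x² + y² = 1}. -/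

import Mathlib

/-!
On `ℳ_c` each `𝐪_i` with `i < n` lies on the ellipse `p_i² + κ_i 𝐪_i² = c_i`, so `𝐪_i² ≤ c_i/κ_i`
and `𝐪_n² = 1 - Σ 𝐪_i² ≥ 1 - Σ c_i/κ_i > 0`. Hence `ℳ_c` splits by the sign of `𝐪_n`, and on
each half `𝐪_n = ±√(1 - Σ 𝐪_i²)` is determined by the other coordinates: forgetting `𝐪_n`
identifies the half with the product of the ellipses, each of which is a rescaled circle.
-/

open Set

lemma mul_sqrt_sq_of_abs_eq_one {s q : ℝ} (hs : |s| = 1) (h : 0 < s * q) : s * √(q ^ 2) = q := by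
  rw [Real.sqrt_sq_eq_abs, ← one_mul |q|, ← hs, ← abs_mul, abs_of_pos h, ← mul_assoc, ← sq,
    ← sq_abs, hs, one_pow, one_mul]

lemma isClopen_setOf_lt_of_forall_ne {X α : Type*} [TopologicalSpace X] [TopologicalSpace α]
    [LinearOrder α] [OrderClosedTopology α] {f : X → α} (hf : Continuous f) {a : α}
    (h : ∀ x, f x ≠ a) :
    IsClopen {x | a < f x} := by
  have hle : {x | a < f x} = {x | a ≤ f x} :=
    Set.ext fun x => ⟨le_of_lt, fun hle => hle.lt_of_ne' (h x)⟩
  exact ⟨hle ▸ isClosed_le continuous_const hf, isOpen_lt continuous_const hf⟩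

lemma isClopen_setOf_gt_of_forall_ne {X α : Type*} [TopologicalSpace X] [TopologicalSpace α]
    [LinearOrder α] [OrderClosedTopology α] {f : X → α} (hf : Continuous f) {a : α}
    (h : ∀ x, f x ≠ a) :
    IsClopen {x | f x < a} := by
  have hcompl : {x | f x < a} = {x | a < f x}ᶜ :=
    Set.ext fun x => ⟨fun hlt => hlt.not_gt, fun hle => (not_lt.mp hle).lt_of_ne (h x)⟩
  exact hcompl ▸ (isClopen_setOf_lt_of_forall_ne hf h).compl

namespace KlebshTisserand

/-- The level set `f_i = c_i` in the coordinates `(𝐪_i, p_i)`. -/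
def ellipse (κ c : ℝ) : Set (ℝ × ℝ) := {y | y.2 ^ 2 + κ * y.1 ^ 2 = c}

noncomputable def ellipseHomeoCircle {κ c : ℝ} (hκ : 0 < κ) (hc : 0 < c) :
    ellipse κ c ≃ₜ {y : ℝ × ℝ // y.1 ^ 2 + y.2 ^ 2 = 1} :=
  ((Homeomorph.mulLeft₀ (√κ / √c) (by positivity)).prodCongr
    (Homeomorph.mulLeft₀ (√c)⁻¹ (by positivity))).subtype fun y => by
      change y.2 ^ 2 + κ * y.1 ^ 2 = c ↔ (√κ / √c * y.1) ^ 2 + ((√c)⁻¹ * y.2) ^ 2 = 1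
      have hc' : √c ^ 2 = c := Real.sq_sqrt hc.le
      rw [mul_pow, mul_pow, div_pow, inv_pow, Real.sq_sqrt hκ.le, hc',
        ← sub_eq_zero, ← sub_eq_zero (b := (1 : ℝ))]
      field_simp
      constructor <;> intro h <;> linear_combination h

lemma sq_le_div_of_mem_ellipse {κ c : ℝ} (hκ : 0 < κ) {y : ℝ × ℝ} (hy : y ∈ ellipse κ c) :
    y.1 ^ 2 ≤ c / κ := by
  have hy : y.2 ^ 2 + κ * y.1 ^ 2 = c := hy
  rw [le_div_iff₀ hκ]
  nlinarith [sq_nonneg y.2]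

variable {m : ℕ} {κ c : Fin m → ℝ}

/-- `ℳ_c` for `n = m + 1`, a point being `(𝐪, p)`. -/
def invariantSet (κ c : Fin m → ℝ) : Set ((Fin (m + 1) → ℝ) × (Fin m → ℝ)) :=
  {x | (∑ j, x.1 j ^ 2 = 1) ∧ ∀ i, (x.1 i.castSucc, x.2 i) ∈ ellipse (κ i) (c i)}

lemma sq_last_eq_one_sub_sum_of_mem_invariantSet {x : (Fin (m + 1) → ℝ) × (Fin m → ℝ)}
    (hx : x ∈ invariantSet κ c) : x.1 (Fin.last m) ^ 2 = 1 - ∑ i : Fin m, x.1 i.castSucc ^ 2 := by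
  have h := hx.1
  rw [Fin.sum_univ_castSucc] at h
  linarith

lemma one_sub_sum_div_le_sq_last (hκ : ∀ i, 0 < κ i) {x : (Fin (m + 1) → ℝ) × (Fin m → ℝ)}
    (hx : x ∈ invariantSet κ c) : 1 - ∑ i, c i / κ i ≤ x.1 (Fin.last m) ^ 2 := by
  rw [sq_last_eq_one_sub_sum_of_mem_invariantSet hx]
  gcongr with i
  exact sq_le_div_of_mem_ellipse (hκ i) (hx.2 i)

lemma last_ne_zero_of_mem_invariantSet (hκ : ∀ i, 0 < κ i) (hsum : ∑ i, c i / κ i < 1)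
    {x : (Fin (m + 1) → ℝ) × (Fin m → ℝ)} (hx : x ∈ invariantSet κ c) : x.1 (Fin.last m) ≠ 0 := by
  intro h0
  have hle := one_sub_sum_div_le_sq_last hκ hx
  rw [h0, zero_pow two_ne_zero] at hle
  linarith

lemma invariantSet_eq_union (hκ : ∀ i, 0 < κ i) (hsum : ∑ i, c i / κ i < 1) :
    invariantSet κ c = {x ∈ invariantSet κ c | 0 < x.1 (Fin.last m)} ∪
      {x ∈ invariantSet κ c | x.1 (Fin.last m) < 0} := by
  ext x
  simp only [mem_union, mem_sep_iff, ← and_or_left, iff_self_and]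
  exact fun hx => (last_ne_zero_of_mem_invariantSet hκ hsum hx).gt_or_lt

lemma sum_sq_lt_one (hκ : ∀ i, 0 < κ i) (hsum : ∑ i, c i / κ i < 1)
    (e : ∀ i, ellipse (κ i) (c i)) : ∑ i, (e i).1.1 ^ 2 < 1 :=
  (Finset.sum_le_sum fun i _ => sq_le_div_of_mem_ellipse (hκ i) (e i).2).trans_lt hsum

noncomputable def liftToInvariantSet (s : ℝ) (e : ∀ i, ellipse (κ i) (c i)) :
    (Fin (m + 1) → ℝ) × (Fin m → ℝ) :=
  (Fin.snoc (fun i => (e i).1.1) (s * √(1 - ∑ i, (e i).1.1 ^ 2)), fun i => (e i).1.2)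

lemma liftToInvariantSet_mem (hκ : ∀ i, 0 < κ i) (hsum : ∑ i, c i / κ i < 1) {s : ℝ}
    (hs : |s| = 1) (e : ∀ i, ellipse (κ i) (c i)) :
    liftToInvariantSet s e ∈ invariantSet κ c ∧
      0 < s * (liftToInvariantSet s e).1 (Fin.last m) := by
  have hpos : 0 < 1 - ∑ i, (e i).1.1 ^ 2 := sub_pos.mpr (sum_sq_lt_one hκ hsum e)
  simp only [liftToInvariantSet, invariantSet, mem_ofPred_eq, Fin.sum_univ_castSucc,
    Fin.snoc_castSucc, Fin.snoc_last]
  refine ⟨⟨?_, fun i => (e i).2⟩, ?_⟩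
  · rw [mul_pow, Real.sq_sqrt hpos.le, ← sq_abs, hs]
    ring
  · rw [← mul_assoc, ← sq, ← sq_abs, hs, one_pow, one_mul]
    exact Real.sqrt_pos.mpr hpos

noncomputable def invariantSetHalfHomeoPiEllipse (hκ : ∀ i, 0 < κ i) (hsum : ∑ i, c i / κ i < 1)
    {s : ℝ} (hs : |s| = 1) :
    {x // x ∈ invariantSet κ c ∧ 0 < s * x.1 (Fin.last m)} ≃ₜ ∀ i, ellipse (κ i) (c i) where
  toFun x i := ⟨(x.1.1 i.castSucc, x.1.2 i), x.2.1.2 i⟩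
  invFun e := ⟨liftToInvariantSet s e, liftToInvariantSet_mem hκ hsum hs e⟩
  left_inv := by
    rintro ⟨⟨q, p⟩, hx, hsgn⟩
    ext j : 3
    · refine Fin.lastCases ?_ (fun i => by simp [liftToInvariantSet]) j
      simp only [liftToInvariantSet, Fin.snoc_last]
      rw [← sq_last_eq_one_sub_sum_of_mem_invariantSet hx]
      exact mul_sqrt_sq_of_abs_eq_one hs hsgn
    · rfl
  right_inv e := by
    ext i : 3
    · simp [liftToInvariantSet]
    · rfl
  continuous_toFun := by fun_prop
  continuous_invFun := by
    unfold liftToInvariantSet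
    fun_prop

noncomputable def invariantSetHalfHomeoTorus (hκ : ∀ i, 0 < κ i) (hc : ∀ i, 0 < c i)
    (hsum : ∑ i, c i / κ i < 1) {s : ℝ} (hs : |s| = 1) :
    {x // x ∈ invariantSet κ c ∧ 0 < s * x.1 (Fin.last m)} ≃ₜ
      (Fin m → {y : ℝ × ℝ // y.1 ^ 2 + y.2 ^ 2 = 1}) :=
  (invariantSetHalfHomeoPiEllipse hκ hsum hs).trans
    (Homeomorph.piCongrRight fun i => ellipseHomeoCircle (hκ i) (hc i))

end KlebshTisserand

open KlebshTisserand

/-- Theorem 4 of the paper (Klebsh–Tisserand case): if `Σ c_i/κ_i < 1` (with all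
`κ_i, c_i > 0`), then on the invariant set
`ℳ_c = {(𝐪,p) ∈ S^{n−1} × ℝ^{n−1} : p_i² + κ_i 𝐪_i² = c_i}` one has `𝐪_n ≠ 0`,
`ℳ_c` splits into the two nonempty clopen pieces `{𝐪_n > 0}` and `{𝐪_n < 0}`, and each
piece is homeomorphic to the `(n−1)`-dimensional torus (a product of `n−1` circles). -/
theorem klebsh_tisserand_invariant_tori (n : ℕ) (hn : 2 ≤ n)
    (κ c : Fin (n - 1) → ℝ) (hκ : ∀ i, 0 < κ i) (hc : ∀ i, 0 < c i)
    (hsum : ∑ i, c i / κ i < 1) :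
    (∀ x : (Fin n → ℝ) × (Fin (n - 1) → ℝ),
      x ∈ {x : (Fin n → ℝ) × (Fin (n - 1) → ℝ) |
          (∑ j, x.1 j ^ 2 = 1) ∧
          ∀ i : Fin (n - 1), x.2 i ^ 2 + κ i * x.1 (Fin.castLE (Nat.sub_le n 1) i) ^ 2 = c i} →
        0 < 1 - ∑ i, c i / κ i ∧
        1 - ∑ i, c i / κ i ≤ x.1 ⟨n - 1, by omega⟩ ^ 2 ∧
        x.1 ⟨n - 1, by omega⟩ ≠ 0) ∧
    ({x : (Fin n → ℝ) × (Fin (n - 1) → ℝ) |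
        ((∑ j, x.1 j ^ 2 = 1) ∧
          ∀ i : Fin (n - 1), x.2 i ^ 2 + κ i * x.1 (Fin.castLE (Nat.sub_le n 1) i) ^ 2 = c i)} =
      {x : (Fin n → ℝ) × (Fin (n - 1) → ℝ) |
        ((∑ j, x.1 j ^ 2 = 1) ∧
          ∀ i : Fin (n - 1), x.2 i ^ 2 + κ i * x.1 (Fin.castLE (Nat.sub_le n 1) i) ^ 2 = c i) ∧
          0 < x.1 ⟨n - 1, by omega⟩} ∪
      {x : (Fin n → ℝ) × (Fin (n - 1) → ℝ) |
        ((∑ j, x.1 j ^ 2 = 1) ∧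
          ∀ i : Fin (n - 1), x.2 i ^ 2 + κ i * x.1 (Fin.castLE (Nat.sub_le n 1) i) ^ 2 = c i) ∧
          x.1 ⟨n - 1, by omega⟩ < 0}) ∧
    Disjoint
      {x : (Fin n → ℝ) × (Fin (n - 1) → ℝ) |
        ((∑ j, x.1 j ^ 2 = 1) ∧
          ∀ i : Fin (n - 1), x.2 i ^ 2 + κ i * x.1 (Fin.castLE (Nat.sub_le n 1) i) ^ 2 = c i) ∧
          0 < x.1 ⟨n - 1, by omega⟩}
      {x : (Fin n → ℝ) × (Fin (n - 1) → ℝ) |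
        ((∑ j, x.1 j ^ 2 = 1) ∧
          ∀ i : Fin (n - 1), x.2 i ^ 2 + κ i * x.1 (Fin.castLE (Nat.sub_le n 1) i) ^ 2 = c i) ∧
          x.1 ⟨n - 1, by omega⟩ < 0} ∧
    {x : (Fin n → ℝ) × (Fin (n - 1) → ℝ) |
        ((∑ j, x.1 j ^ 2 = 1) ∧
          ∀ i : Fin (n - 1), x.2 i ^ 2 + κ i * x.1 (Fin.castLE (Nat.sub_le n 1) i) ^ 2 = c i) ∧
          0 < x.1 ⟨n - 1, by omega⟩}.Nonempty ∧
    {x : (Fin n → ℝ) × (Fin (n - 1) → ℝ) |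
        ((∑ j, x.1 j ^ 2 = 1) ∧
          ∀ i : Fin (n - 1), x.2 i ^ 2 + κ i * x.1 (Fin.castLE (Nat.sub_le n 1) i) ^ 2 = c i) ∧
          x.1 ⟨n - 1, by omega⟩ < 0}.Nonempty ∧
    IsClopen {y : {x : (Fin n → ℝ) × (Fin (n - 1) → ℝ) |
          (∑ j, x.1 j ^ 2 = 1) ∧
          ∀ i : Fin (n - 1), x.2 i ^ 2 + κ i * x.1 (Fin.castLE (Nat.sub_le n 1) i) ^ 2 = c i} |
        0 < (y : (Fin n → ℝ) × (Fin (n - 1) → ℝ)).1 ⟨n - 1, by omega⟩} ∧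
    IsClopen {y : {x : (Fin n → ℝ) × (Fin (n - 1) → ℝ) |
          (∑ j, x.1 j ^ 2 = 1) ∧
          ∀ i : Fin (n - 1), x.2 i ^ 2 + κ i * x.1 (Fin.castLE (Nat.sub_le n 1) i) ^ 2 = c i} |
        (y : (Fin n → ℝ) × (Fin (n - 1) → ℝ)).1 ⟨n - 1, by omega⟩ < 0} ∧
    Nonempty
      ({x : (Fin n → ℝ) × (Fin (n - 1) → ℝ) //
          ((∑ j, x.1 j ^ 2 = 1) ∧
            ∀ i : Fin (n - 1), x.2 i ^ 2 + κ i * x.1 (Fin.castLE (Nat.sub_le n 1) i) ^ 2 = c i) ∧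
            0 < x.1 ⟨n - 1, by omega⟩} ≃ₜ
        (∀ _ : Fin (n - 1), {y : ℝ × ℝ // y.1 ^ 2 + y.2 ^ 2 = 1})) ∧
    Nonempty
      ({x : (Fin n → ℝ) × (Fin (n - 1) → ℝ) //
          ((∑ j, x.1 j ^ 2 = 1) ∧
            ∀ i : Fin (n - 1), x.2 i ^ 2 + κ i * x.1 (Fin.castLE (Nat.sub_le n 1) i) ^ 2 = c i) ∧
            x.1 ⟨n - 1, by omega⟩ < 0} ≃ₜ
        (∀ _ : Fin (n - 1), {y : ℝ × ℝ // y.1 ^ 2 + y.2 ^ 2 = 1})) := by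
  obtain ⟨m, rfl⟩ : ∃ m, n = m + 1 := ⟨n - 1, by omega⟩
  -- `Fin (m + 1 - 1)` and `Fin m` are definitionally equal.
  change Fin m → ℝ at κ c
  have hne (x : invariantSet κ c) : x.1.1 (Fin.last m) ≠ 0 :=
    last_ne_zero_of_mem_invariantSet hκ hsum x.2
  have hcont : Continuous fun x : invariantSet κ c => x.1.1 (Fin.last m) := by fun_prop
  have pos : {x // x ∈ invariantSet κ c ∧ 0 < x.1 (Fin.last m)} ≃ₜ
      (Fin m → {y : ℝ × ℝ // y.1 ^ 2 + y.2 ^ 2 = 1}) :=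
    ((Homeomorph.refl _).subtype fun x => by simp).trans
      (invariantSetHalfHomeoTorus hκ hc hsum abs_one)
  have neg : {x // x ∈ invariantSet κ c ∧ x.1 (Fin.last m) < 0} ≃ₜ
      (Fin m → {y : ℝ × ℝ // y.1 ^ 2 + y.2 ^ 2 = 1}) :=
    ((Homeomorph.refl _).subtype fun x => by simp).trans
      (invariantSetHalfHomeoTorus hκ hc hsum (s := -1) (by norm_num))
  have torusPt : Fin m → {y : ℝ × ℝ // y.1 ^ 2 + y.2 ^ 2 = 1} := fun _ => ⟨(1, 0), by norm_num⟩
  exact ⟨fun x hx => ⟨sub_pos.mpr hsum, one_sub_sum_div_le_sq_last hκ hx, hne ⟨x, hx⟩⟩,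
    invariantSet_eq_union hκ hsum,
    Set.disjoint_left.mpr fun x hpos hneg => hpos.2.not_gt hneg.2,
    ⟨_, (pos.symm torusPt).2⟩, ⟨_, (neg.symm torusPt).2⟩,
    isClopen_setOf_lt_of_forall_ne hcont hne, isClopen_setOf_gt_of_forall_ne hcont hne,
    ⟨pos⟩, ⟨neg⟩⟩
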